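/- Let γ ∈ (0,1] and α ≥ 0. Let s, y, u, v : (0,∞) → ℝ with s continuous and s(r) > 0 for all r, y twice differentiable with y(r) > 0 for all r, v twice differentiable, u differentiable, and r ↦ r u(r)(γ s(r)² + 4α v(r)²) differentiable. Suppose that on (0,∞) the equations (V): v'' + v'/r − v/r² + 2(2y'u + y u' + y u/r) − 4 v u² − γ v s² = 0, (U): v' y − v y' + (2y² + (γ/2) s² + 2v²) u = 0, and (I) with x ≡ 0: (r u (γ s² + 4α v²))' + 2r (4α y u²) v = 0 hold. Assume the function Φ(r) := r u v (γ s² + 4α v²)/y tends to 0 as r → 0⁺ and as r → ∞, Φ' is integrable on (0,∞), r ↦ 2r{[1 + (v² + (γ/4)s²)/y²](γ s² + 4α v²) + 4α v²} u² is integrable on (0,∞), and v(r) → 0 as r → 0⁺ and as r → ∞. Then u ≡ 0 and v ≡ 0 on (0,∞). -/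

import Mathlib

open Set Filter MeasureTheory Topology Real

/-!
Write `Φ = flux` for the function `r u v (γ s² + 4α v²) / y`. Combining (U) and (I) gives
`Φ' = -c u²` with a weight `c > 0`, so `Φ` is antitone on `(0, ∞)`; since it vanishes at both
ends, `Φ ≡ 0`, hence `Φ' ≡ 0` and `u ≡ 0`. With `u ≡ 0`, (V) becomes
`v'' = -v'/r + (1/r² + γ s²) v`, and a function satisfying `w'' = p w' + q w` with `q > 0`
has no positive interior maximum (nor, applied to `-w`, negative minimum), so tending to `0`
at both ends forces `v ≡ 0`.
-/

theorem HasDerivAt.eq_zero_of_eventuallyEq_const {f : ℝ → ℝ} {f' x c : ℝ}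
    (hf : HasDerivAt f f' x) (h : f =ᶠ[𝓝 x] fun _ => c) : f' = 0 :=
  hf.unique ((hasDerivAt_const x c).congr_of_eventuallyEq h)

theorem not_isLocalMax_of_hasDerivAt_deriv_pos {w w' : ℝ → ℝ} {x c : ℝ}
    (hw : ∀ᶠ y in 𝓝 x, HasDerivAt w (w' y) y) (hw' : HasDerivAt w' c x)
    (hx : w' x = 0) (hc : 0 < c) : ¬IsLocalMax w x := by
  intro hmax
  -- By the second-derivative test `x` is also a local minimum, so `w` is locally constant.
  have hderiv : deriv w =ᶠ[𝓝 x] w' := hw.mono fun y hy => hy.deriv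
  have hmin : IsLocalMin w x := by
    refine isLocalMin_of_deriv_deriv_pos ?_ (hderiv.eq_of_nhds.trans hx)
      hw.self_of_nhds.continuousAt
    rwa [hderiv.deriv_eq, hw'.deriv]
  have hconst : w =ᶠ[𝓝 x] fun _ => w x :=
    (hmin.and hmax).mono fun y hy => le_antisymm hy.2 hy.1
  have hw'0 : w' =ᶠ[𝓝 x] fun _ => 0 :=
    (hw.and hconst.eventually_nhds).mono fun y hy => hy.1.eq_zero_of_eventuallyEq_const hy.2
  exact hc.ne' (hw'.eq_zero_of_eventuallyEq_const hw'0)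

theorem exists_isLocalMax_ge_of_tendsto_zero {w : ℝ → ℝ} {a r : ℝ} (hw : ContinuousOn w (Ioi a))
    (h0 : Tendsto w (𝓝[>] a) (𝓝 0)) (hinf : Tendsto w atTop (𝓝 0)) (hr : a < r)
    (hwr : 0 < w r) : ∃ x ∈ Ioi a, IsLocalMax w x ∧ w r ≤ w x := by
  obtain ⟨p, hpw, hp⟩ := ((h0.eventually_lt_const hwr).and (Ioo_mem_nhdsGT hr)).exists
  obtain ⟨q, hqw, hq⟩ := ((hinf.eventually_lt_const hwr).and (eventually_gt_atTop r)).exists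
  obtain ⟨x, hx, hmax⟩ := isCompact_Icc.exists_isMaxOn ⟨r, hp.2.le, hq.le⟩
    (hw.mono fun t ht => hp.1.trans_le ht.1)
  have hrx : w r ≤ w x := hmax ⟨hp.2.le, hq.le⟩
  have hpx : p < x := hx.1.lt_of_ne (by rintro rfl; linarith)
  have hxq : x < q := hx.2.lt_of_ne (by rintro rfl; linarith)
  exact ⟨x, hp.1.trans hpx, hmax.isLocalMax (Icc_mem_nhds hpx hxq), hrx⟩

theorem nonpos_of_deriv2_eq_of_tendsto_zero {w w' w'' p q : ℝ → ℝ} {a : ℝ}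
    (hw : ∀ x ∈ Ioi a, HasDerivAt w (w' x) x) (hw' : ∀ x ∈ Ioi a, HasDerivAt w' (w'' x) x)
    (hq : ∀ x ∈ Ioi a, 0 < q x) (hode : ∀ x ∈ Ioi a, w'' x = p x * w' x + q x * w x)
    (h0 : Tendsto w (𝓝[>] a) (𝓝 0)) (hinf : Tendsto w atTop (𝓝 0)) :
    ∀ x ∈ Ioi a, w x ≤ 0 := by
  intro r hr
  by_contra! hpos
  obtain ⟨x, hx, hmax, hrx⟩ := exists_isLocalMax_ge_of_tendsto_zero
    (fun t ht => (hw t ht).continuousAt.continuousWithinAt) h0 hinf hr hpos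
  have hx' : w' x = 0 := hmax.hasDerivAt_eq_zero (hw x hx)
  refine not_isLocalMax_of_hasDerivAt_deriv_pos
    (eventually_of_mem (isOpen_Ioi.mem_nhds hx) hw) (hw' x hx) hx' ?_ hmax
  rw [hode x hx, hx', mul_zero, zero_add]
  exact mul_pos (hq x hx) (hpos.trans_le hrx)

theorem eqOn_zero_of_deriv2_eq_of_tendsto_zero {w w' w'' p q : ℝ → ℝ} {a : ℝ}
    (hw : ∀ x ∈ Ioi a, HasDerivAt w (w' x) x) (hw' : ∀ x ∈ Ioi a, HasDerivAt w' (w'' x) x)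
    (hq : ∀ x ∈ Ioi a, 0 < q x) (hode : ∀ x ∈ Ioi a, w'' x = p x * w' x + q x * w x)
    (h0 : Tendsto w (𝓝[>] a) (𝓝 0)) (hinf : Tendsto w atTop (𝓝 0)) :
    EqOn w 0 (Ioi a) := by
  have hneg : ∀ x ∈ Ioi a, -w x ≤ 0 :=
    nonpos_of_deriv2_eq_of_tendsto_zero (w := (-w ·)) (fun x hx => (hw x hx).neg)
      (fun x hx => (hw' x hx).neg) hq (fun x hx => by rw [hode x hx]; ring)
      (by simpa using h0.neg) (by simpa using hinf.neg)
  exact fun x hx => le_antisymm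
    (nonpos_of_deriv2_eq_of_tendsto_zero hw hw' hq hode h0 hinf x hx) (neg_nonpos.mp (hneg x hx))

theorem eqOn_of_antitoneOn_of_tendsto {f : ℝ → ℝ} {a c : ℝ} (hf : AntitoneOn f (Ioi a))
    (h0 : Tendsto f (𝓝[>] a) (𝓝 c)) (hinf : Tendsto f atTop (𝓝 c)) :
    EqOn f (fun _ => c) (Ioi a) := by
  intro r hr
  apply le_antisymm
  · refine ge_of_tendsto h0 ?_
    filter_upwards [Ioo_mem_nhdsGT hr] with t ht
    exact hf ht.1 hr ht.2.le
  · refine le_of_tendsto hinf ?_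
    filter_upwards [eventually_ge_atTop r] with t ht
    exact hf hr (lt_of_lt_of_le hr ht) ht

noncomputable def flux (γ α : ℝ) (s y u v : ℝ → ℝ) (r : ℝ) : ℝ :=
  r * u r * v r * (γ * s r ^ 2 + 4 * α * v r ^ 2) / y r

noncomputable def fluxWeight (γ α : ℝ) (s y v : ℝ → ℝ) (r : ℝ) : ℝ :=
  2 * r * ((1 + (v r ^ 2 + γ / 4 * s r ^ 2) / y r ^ 2)
    * (γ * s r ^ 2 + 4 * α * v r ^ 2) + 4 * α * v r ^ 2)

theorem fluxWeight_pos {γ α r : ℝ} {s y v : ℝ → ℝ} (hγ : 0 < γ) (hα : 0 ≤ α) (hr : 0 < r)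
    (hs : s r ≠ 0) : 0 < fluxWeight γ α s y v r := by
  unfold fluxWeight
  positivity

theorem hasDerivAt_flux {γ α r y' v' U' : ℝ} {s y u v : ℝ → ℝ} (hy0 : y r ≠ 0)
    (hy : HasDerivAt y y' r) (hv : HasDerivAt v v' r)
    (hUd : HasDerivAt (fun t => t * u t * (γ * s t ^ 2 + 4 * α * v t ^ 2)) U' r)
    (hU : v' * y r - v r * y' + (2 * y r ^ 2 + γ / 2 * s r ^ 2 + 2 * v r ^ 2) * u r = 0)
    (hI : U' + 2 * r * (4 * α * y r * u r ^ 2) * v r = 0) :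
    HasDerivAt (flux γ α s y u v) (-(fluxWeight γ α s y v r * u r ^ 2)) r := by
  have hprod := hUd.mul (hv.div hy hy0)
  have hflux : flux γ α s y u v
      = fun t => t * u t * (γ * s t ^ 2 + 4 * α * v t ^ 2) * (v t / y t) := by
    funext t
    simp only [flux]
    ring
  rw [hflux]
  refine hprod.congr_deriv ?_
  rw [eq_neg_of_add_eq_zero_left hI, eq_sub_of_add_eq hU]
  simp only [fluxWeight, Pi.div_apply]
  field_simp
  ring

theorem statement6 (γ α : ℝ) (hγ : γ ∈ Set.Ioc (0:ℝ) 1) (hα : 0 ≤ α)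
    (s y u v y' u' v' v'' U' : ℝ → ℝ)
    (hspos : ∀ r : ℝ, 0 < r → 0 < s r)
    (hy : ∀ r ∈ Set.Ioi (0:ℝ), HasDerivAt y (y' r) r)
    (hypos : ∀ r : ℝ, 0 < r → 0 < y r)
    (hu : ∀ r ∈ Set.Ioi (0:ℝ), HasDerivAt u (u' r) r)
    (hv : ∀ r ∈ Set.Ioi (0:ℝ), HasDerivAt v (v' r) r)
    (hv' : ∀ r ∈ Set.Ioi (0:ℝ), HasDerivAt v' (v'' r) r)
    (hUd : ∀ r ∈ Set.Ioi (0:ℝ),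
      HasDerivAt (fun t => t * u t * (γ * s t ^ 2 + 4 * α * v t ^ 2)) (U' r) r)
    (hV : ∀ r ∈ Set.Ioi (0:ℝ),
      v'' r + v' r / r - v r / r ^ 2
        + 2 * (2 * y' r * u r + y r * u' r + y r * u r / r)
        - 4 * v r * u r ^ 2 - γ * v r * s r ^ 2 = 0)
    (hU : ∀ r ∈ Set.Ioi (0:ℝ),
      v' r * y r - v r * y' r
        + (2 * y r ^ 2 + γ / 2 * s r ^ 2 + 2 * v r ^ 2) * u r = 0)
    (hI : ∀ r ∈ Set.Ioi (0:ℝ),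
      U' r + 2 * r * (4 * α * y r * u r ^ 2) * v r = 0)
    (hΦ0 : Filter.Tendsto
      (fun r => r * u r * v r * (γ * s r ^ 2 + 4 * α * v r ^ 2) / y r)
      (nhdsWithin 0 (Set.Ioi 0)) (nhds 0))
    (hΦinf : Filter.Tendsto
      (fun r => r * u r * v r * (γ * s r ^ 2 + 4 * α * v r ^ 2) / y r)
      Filter.atTop (nhds 0))
    (hv0 : Filter.Tendsto v (nhdsWithin 0 (Set.Ioi 0)) (nhds 0))
    (hvinf : Filter.Tendsto v Filter.atTop (nhds 0)) :
    ∀ r : ℝ, 0 < r → u r = 0 ∧ v r = 0 := by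
  have hflux (r : ℝ) (hr : r ∈ Ioi 0) :
      HasDerivAt (flux γ α s y u v) (-(fluxWeight γ α s y v r * u r ^ 2)) r :=
    hasDerivAt_flux (hypos r hr).ne' (hy r hr) (hv r hr) (hUd r hr) (hU r hr) (hI r hr)
  have hweight (r : ℝ) (hr : r ∈ Ioi 0) : 0 < fluxWeight γ α s y v r :=
    fluxWeight_pos hγ.1 hα hr (hspos r hr).ne'
  have hanti : AntitoneOn (flux γ α s y u v) (Ioi 0) := by
    refine antitoneOn_of_hasDerivWithinAt_nonpos (convex_Ioi 0)
      (f' := fun r => -(fluxWeight γ α s y v r * u r ^ 2))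
      (fun r hr => (hflux r hr).continuousAt.continuousWithinAt) ?_ ?_ <;> rw [interior_Ioi]
    · exact fun r hr => (hflux r hr).hasDerivWithinAt
    · exact fun r hr => neg_nonpos.mpr (mul_nonneg (hweight r hr).le (sq_nonneg _))
  have hfluxzero := eqOn_of_antitoneOn_of_tendsto hanti hΦ0 hΦinf
  have huzero (r : ℝ) (hr : r ∈ Ioi 0) : u r = 0 := by
    have h := (hflux r hr).eq_zero_of_eventuallyEq_const
      (eventually_of_mem (isOpen_Ioi.mem_nhds hr) hfluxzero)
    simpa [(hweight r hr).ne'] using h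
  have hu'zero (r : ℝ) (hr : r ∈ Ioi 0) : u' r = 0 :=
    (hu r hr).eq_zero_of_eventuallyEq_const (eventually_of_mem (isOpen_Ioi.mem_nhds hr) huzero)
  have hvzero : EqOn v 0 (Ioi 0) := by
    refine eqOn_zero_of_deriv2_eq_of_tendsto_zero hv hv' (p := fun r => -1 / r)
      (q := fun r => 1 / r ^ 2 + γ * s r ^ 2) (fun r hr => ?_) (fun r hr => ?_) hv0 hvinf
    · exact add_pos (one_div_pos.mpr (pow_pos hr 2)) (mul_pos hγ.1 (pow_pos (hspos r hr) 2))
    · have h := hV r hr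
      rw [huzero r hr, hu'zero r hr] at h
      linear_combination h
  exact fun r hr => ⟨huzero r hr, hvzero hr⟩
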